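/- Let p ≥ 5 be a prime. The algebra Θ is a free module over its subalgebra F_p[μ] with basis given by the following elements: u^i for 0 ≤ i ≤ p−2; u^i·a_j for 0 ≤ i ≤ p−3 and 0 ≤ j ≤ p−1; u^{p−2}·a_{p−1}; and u^i·b_j for 0 ≤ i ≤ p−3 and 1 ≤ j ≤ p−1. -/

import Mathlib

noncomputable section

/-- Generators of Ausoni's algebra `Θ`: `u`, `μ`, `a_0, …, a_{p-1}` and
`b_0, …, b_{p-1}` (with `b_0` identified with `u` by a relation). -/
inductive ThetaGen (p : ℕ) : Type
  | u : ThetaGen p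
  | mu : ThetaGen p
  | a : Fin p → ThetaGen p
  | b : Fin p → ThetaGen p

open MvPolynomial in
/-- The defining relations of Ausoni's algebra `Θ`. -/
def thetaRels (p : ℕ) [NeZero p] : Set (MvPolynomial (ThetaGen p) (ZMod p)) :=
  {q | -- the convention b_0 = u
       q = X (ThetaGen.b 0) - X ThetaGen.u ∨
       -- u^{p-1} = 0
       q = X (ThetaGen.u) ^ (p - 1) ∨
       -- u^{p-2}·a_i = 0 for 0 ≤ i ≤ p-2
       (∃ i : Fin p, (i : ℕ) ≤ p - 2 ∧ q = X ThetaGen.u ^ (p - 2) * X (ThetaGen.a i)) ∨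
       -- u^{p-2}·b_j = 0 for 1 ≤ j ≤ p-1
       (∃ j : Fin p, 1 ≤ (j : ℕ) ∧ q = X ThetaGen.u ^ (p - 2) * X (ThetaGen.b j)) ∨
       -- b_i·b_j = u·b_{i+j} for 1 ≤ i, j ≤ p-1 with i + j ≤ p-1
       (∃ i j k : Fin p, 1 ≤ (i : ℕ) ∧ 1 ≤ (j : ℕ) ∧ (i : ℕ) + (j : ℕ) ≤ p - 1 ∧
          (k : ℕ) = (i : ℕ) + (j : ℕ) ∧
          q = X (ThetaGen.b i) * X (ThetaGen.b j) - X ThetaGen.u * X (ThetaGen.b k)) ∨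
       -- a_i·b_j = u·a_{i+j} for 1 ≤ j ≤ p-1 with i + j ≤ p-1
       (∃ i j k : Fin p, 1 ≤ (j : ℕ) ∧ (i : ℕ) + (j : ℕ) ≤ p - 1 ∧
          (k : ℕ) = (i : ℕ) + (j : ℕ) ∧
          q = X (ThetaGen.a i) * X (ThetaGen.b j) - X ThetaGen.u * X (ThetaGen.a k)) ∨
       -- b_i·b_j = u·μ·b_{i+j-p} for 1 ≤ i, j ≤ p-1 with i + j ≥ p
       (∃ i j k : Fin p, 1 ≤ (i : ℕ) ∧ 1 ≤ (j : ℕ) ∧ p ≤ (i : ℕ) + (j : ℕ) ∧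
          (k : ℕ) + p = (i : ℕ) + (j : ℕ) ∧
          q = X (ThetaGen.b i) * X (ThetaGen.b j) -
              X ThetaGen.u * X ThetaGen.mu * X (ThetaGen.b k)) ∨
       -- a_i·b_j = u·μ·a_{i+j-p} for 1 ≤ j ≤ p-1 with i + j ≥ p
       (∃ i j k : Fin p, 1 ≤ (j : ℕ) ∧ p ≤ (i : ℕ) + (j : ℕ) ∧
          (k : ℕ) + p = (i : ℕ) + (j : ℕ) ∧
          q = X (ThetaGen.a i) * X (ThetaGen.b j) -
              X ThetaGen.u * X ThetaGen.mu * X (ThetaGen.a k)) ∨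
       -- a_i·a_j = 0
       (∃ i j : Fin p, q = X (ThetaGen.a i) * X (ThetaGen.a j)) }

/-- Ausoni's commutative `F_p`-algebra `Θ`, presented by generators and relations. -/
def Theta (p : ℕ) [NeZero p] : Type :=
  MvPolynomial (ThetaGen p) (ZMod p) ⧸ Ideal.span (thetaRels p)

noncomputable instance (p : ℕ) [NeZero p] : CommRing (Theta p) :=
  Ideal.Quotient.commRing _

noncomputable instance (p : ℕ) [NeZero p] : Algebra (ZMod p) (Theta p) :=
  Ideal.Quotient.algebra _

/-- The generator `u` of `Θ`. -/
def thetaU (p : ℕ) [NeZero p] : Theta p :=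
  Ideal.Quotient.mk _ (MvPolynomial.X ThetaGen.u)

/-- The generator `μ` of `Θ`. -/
def thetaMu (p : ℕ) [NeZero p] : Theta p :=
  Ideal.Quotient.mk _ (MvPolynomial.X ThetaGen.mu)

/-- The generators `a_i` of `Θ`. -/
def thetaA (p : ℕ) [NeZero p] (i : Fin p) : Theta p :=
  Ideal.Quotient.mk _ (MvPolynomial.X (ThetaGen.a i))

/-- The generators `b_j` of `Θ`. -/
def thetaB (p : ℕ) [NeZero p] (j : Fin p) : Theta p :=
  Ideal.Quotient.mk _ (MvPolynomial.X (ThetaGen.b j))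

/-- Index type for the asserted `F_p[μ]`-basis of `Θ`: the elements `u^i` (`0 ≤ i ≤ p-2`),
`u^i·a_j` (`0 ≤ i ≤ p-3`, `0 ≤ j ≤ p-1`), `u^{p-2}·a_{p-1}`, and `u^i·b_j`
(`0 ≤ i ≤ p-3`, `1 ≤ j ≤ p-1`). -/
def ThetaBasisIndex (p : ℕ) : Type :=
  {i : ℕ // i ≤ p - 2} ⊕ ({i : ℕ // i ≤ p - 3} × Fin p) ⊕ Unit ⊕
    ({i : ℕ // i ≤ p - 3} × {j : Fin p // 1 ≤ (j : ℕ)})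

/-!
Spanning: the `F_p[μ]`-span of the family contains every `u^i`, `u^i a_j` and `u^i b_j` (the
relations kill those outside the family, and `b_0 = u`), and it is stable under multiplication by
the generators, since the relations turn `a_i b_j` and `b_i b_j` into `u μ^e a_k` and `u μ^e b_k`.

Independence: `u ↦ u`, `μ ↦ t^p`, `a_j ↦ α t^j`, `b_j ↦ u t^j` defines a map from `Θ` to the
contracted algebra of a truncated monoid of exponents of monomials `α^e u^i t^k`. It sends the
elements `μ^m · u^i a_j`, ... to pairwise distinct nonzero monomials, so these are independent over
`F_p`, which is independence of the family over `F_p[μ]`.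
-/

/-- The axiom is what makes the truncated sum on `V ∪ {top}` associative. -/
structure TruncSet (M : Type*) [AddCommMonoid M] where
  carrier : Set M
  zero_mem : 0 ∈ carrier
  add_mem_of_add_add_mem {x y z : M} : x ∈ carrier → y ∈ carrier → z ∈ carrier →
    x + y + z ∈ carrier → x + y ∈ carrier

/-- `V ∪ {top}`, where a sum leaving `V` is the absorbing element `top`. -/
inductive Truncation {M : Type*} [AddCommMonoid M] (V : TruncSet M) : Type _
  | top : Truncation V
  | mk (x : M) (hx : x ∈ V.carrier) : Truncation V

namespace Truncation

variable {M : Type*} [AddCommMonoid M] {V : TruncSet M}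

open Classical in
def of (x : M) : Truncation V := if h : x ∈ V.carrier then mk x h else top

instance : Add (Truncation V) where
  add
    | mk x _, mk y _ => of (x + y)
    | _, _ => top

instance : Zero (Truncation V) := ⟨mk 0 V.zero_mem⟩

lemma of_of_mem {x : M} (hx : x ∈ V.carrier) : (of x : Truncation V) = mk x hx := dif_pos hx

lemma of_of_notMem {x : M} (hx : x ∉ V.carrier) : (of x : Truncation V) = top := dif_neg hx

lemma mk_add_mk {x y : M} (hx : x ∈ V.carrier) (hy : y ∈ V.carrier) :
    (mk x hx + mk y hy : Truncation V) = of (x + y) := rfl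

lemma top_add (x : Truncation V) : top + x = top := rfl

lemma add_top (x : Truncation V) : x + top = top := by cases x <;> rfl

lemma of_add {x y : M} (h : x + y ∈ V.carrier → x ∈ V.carrier ∧ y ∈ V.carrier) :
    (of (x + y) : Truncation V) = of x + of y := by
  by_cases hxy : x + y ∈ V.carrier
  · rw [of_of_mem (h hxy).1, of_of_mem (h hxy).2, mk_add_mk]
  by_cases hx : x ∈ V.carrier
  · by_cases hy : y ∈ V.carrier
    · rw [of_of_mem hx, of_of_mem hy, mk_add_mk]
    · rw [of_of_notMem hxy, of_of_notMem hy, add_top]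
  · rw [of_of_notMem hxy, of_of_notMem hx, top_add]

protected lemma add_comm (x y : Truncation V) : x + y = y + x := by
  rcases x with _ | ⟨x, hx⟩ <;> rcases y with _ | ⟨y, hy⟩ <;>
    first | rfl | simp only [mk_add_mk, add_comm x]

protected lemma add_assoc (x y z : Truncation V) : x + y + z = x + (y + z) := by
  rcases x with _ | ⟨x, hx⟩ <;> rcases y with _ | ⟨y, hy⟩ <;> rcases z with _ | ⟨z, hz⟩ <;>
    try simp only [top_add, add_top]
  simp only [mk_add_mk]
  by_cases hxyz : x + y + z ∈ V.carrier
  · have hxy := V.add_mem_of_add_add_mem hx hy hz hxyz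
    have hyz := V.add_mem_of_add_add_mem hy hz hx (by rwa [add_comm, ← add_assoc])
    rw [of_of_mem hxy, of_of_mem hyz, mk_add_mk, mk_add_mk, add_assoc]
  · have hleft : of (x + y) + mk z hz = top := by
      by_cases hxy : x + y ∈ V.carrier
      · rw [of_of_mem hxy, mk_add_mk, of_of_notMem hxyz]
      · rw [of_of_notMem hxy, top_add]
    have hright : mk x hx + of (y + z) = top := by
      by_cases hyz : y + z ∈ V.carrier
      · rw [of_of_mem hyz, mk_add_mk, of_of_notMem (by rwa [← add_assoc])]
      · rw [of_of_notMem hyz, add_top]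
    rw [hleft, hright]

protected lemma zero_add (x : Truncation V) : 0 + x = x := by
  rcases x with _ | ⟨x, hx⟩
  · rfl
  · change of (0 + x) = _
    rw [zero_add, of_of_mem hx]

instance : AddCommMonoid (Truncation V) where
  add_assoc := Truncation.add_assoc
  zero_add := Truncation.zero_add
  add_zero x := by rw [Truncation.add_comm]; exact Truncation.zero_add x
  add_comm := Truncation.add_comm
  nsmul := nsmulRec

open AddMonoidAlgebra

/-- The contracted monoid algebra of `Truncation V`: the absorbing element becomes `0`. -/
abbrev TruncAlgebra (R : Type*) [CommRing R] (V : TruncSet M) : Type _ :=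
  AddMonoidAlgebra R (Truncation V) ⧸ Ideal.span {single (top : Truncation V) (1 : R)}

namespace TruncAlgebra

variable {R : Type*} [CommRing R]

def monom (x : M) : TruncAlgebra R V := Ideal.Quotient.mk _ (single (of x) 1)

lemma monom_zero : (monom 0 : TruncAlgebra R V) = 1 := by
  rw [monom, of_of_mem V.zero_mem]
  exact map_one _

lemma monom_of_notMem {x : M} (hx : x ∉ V.carrier) : (monom x : TruncAlgebra R V) = 0 := by
  rw [monom, of_of_notMem hx, Ideal.Quotient.eq_zero_iff_mem]
  exact Ideal.subset_span rfl

lemma monom_add {x y : M} (h : x + y ∈ V.carrier → x ∈ V.carrier ∧ y ∈ V.carrier) :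
    (monom (x + y) : TruncAlgebra R V) = monom x * monom y := by
  rw [monom, monom, monom, of_add h, ← map_mul, single_mul_single, one_mul]

lemma coeff_mk_eq_zero_of_mem {f : AddMonoidAlgebra R (Truncation V)}
    (hf : f ∈ Ideal.span {single (top : Truncation V) (1 : R)}) {x : M} (hx : x ∈ V.carrier) :
    f.coeff (mk x hx) = 0 := by
  obtain ⟨g, rfl⟩ := Ideal.mem_span_singleton'.1 hf
  exact coeff_mul_single_of_forall_add_ne _ _ fun d => by rw [add_top]; nofun

lemma linearIndependent_monom :
    LinearIndependent R (fun x : V.carrier => (monom x.1 : TruncAlgebra R V)) := by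
  classical
  refine linearIndependent_iff'.2 fun s c hc x hx => ?_
  have hmem : ∑ y ∈ s, single (mk y.1 y.2 : Truncation V) (c y) ∈
      Ideal.span {single (top : Truncation V) (1 : R)} := by
    rw [← Ideal.Quotient.eq_zero_iff_mem, ← hc, map_sum]
    refine Finset.sum_congr rfl fun y _ => ?_
    rw [monom, of_of_mem y.2, ← Ideal.Quotient.mkₐ_eq_mk R, ← map_smul, smul_single', mul_one]
  have hcoeff := coeff_mk_eq_zero_of_mem hmem x.2
  rw [coeff_sum, Finset.sum_apply', Finset.sum_eq_single x] at hcoeff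
  · simpa [coeff_single] using hcoeff
  · intro y _ hyx
    rw [coeff_single, Finsupp.single_eq_of_ne]
    intro h
    injection h with h
    exact hyx (Subtype.ext h.symm)
  · exact fun h => absurd hx h

end TruncAlgebra

end Truncation

open Polynomial in
theorem linearIndependent_adjoin_singleton_of_pow_mul {R A ι : Type*} [CommRing R] [CommRing A]
    [Algebra R A] {x : A} {v : ι → A}
    (h : LinearIndependent R fun im : ι × ℕ => x ^ im.2 * v im.1) :
    LinearIndependent (Algebra.adjoin R {x}) v := by
  classical
  refine linearIndependent_iff'.2 fun s g hg i hi => ?_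
  have hpoly (j : ι) : ∃ q : R[X], aeval x q = g j := by
    simpa [Algebra.adjoin_singleton_eq_range_aeval] using (g j).2
  choose q hq using hpoly
  set N := s.sup (fun j => (q j).natDegree) + 1
  have hdeg {j} (hj : j ∈ s) : (q j).natDegree < N :=
    Nat.lt_succ_of_le (Finset.le_sup (f := fun j => (q j).natDegree) hj)
  have hsum : ∑ im ∈ s ×ˢ Finset.range N, (q im.1).coeff im.2 • (x ^ im.2 * v im.1) = 0 := by
    rw [Finset.sum_product, ← hg]
    refine Finset.sum_congr rfl fun j hj => ?_
    rw [Subalgebra.smul_def, smul_eq_mul, ← hq, aeval_eq_sum_range' (hdeg hj), Finset.sum_mul]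
    exact Finset.sum_congr rfl fun m _ => (smul_mul_assoc _ _ _).symm
  have hcoeff := linearIndependent_iff'.1 h _ _ hsum
  have hqi : q i = 0 := by
    ext m
    by_cases hm : m < N
    · exact hcoeff (i, m) (Finset.mem_product.2 ⟨hi, Finset.mem_range.2 hm⟩)
    · exact coeff_eq_zero_of_natDegree_lt ((hdeg hi).trans_le (not_lt.1 hm))
  exact Subtype.ext (by rw [← hq, hqi, map_zero]; rfl)

section ThetaRelations

variable {p : ℕ} [NeZero p]

open MvPolynomial

private lemma mk_eq_zero_of_mem_thetaRels {r : MvPolynomial (ThetaGen p) (ZMod p)}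
    (hr : r ∈ thetaRels p) : (Ideal.Quotient.mk (Ideal.span (thetaRels p)) r : Theta p) = 0 :=
  Ideal.Quotient.eq_zero_iff_mem.2 (Ideal.subset_span hr)

lemma thetaB_zero : thetaB p 0 = thetaU p := by
  have h := mk_eq_zero_of_mem_thetaRels (p := p) (Or.inl rfl)
  rwa [map_sub, sub_eq_zero] at h

lemma thetaU_pow_pred : thetaU p ^ (p - 1) = 0 := by
  have h := mk_eq_zero_of_mem_thetaRels (p := p) (Or.inr (Or.inl rfl))
  rwa [map_pow] at h

lemma thetaU_pow_eq_zero {i : ℕ} (hi : p - 1 ≤ i) : thetaU p ^ i = 0 := by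
  rw [← Nat.sub_add_cancel hi, pow_add, thetaU_pow_pred, mul_zero]

lemma thetaU_pow_sub_two_mul_thetaA {i : Fin p} (hi : (i : ℕ) ≤ p - 2) :
    thetaU p ^ (p - 2) * thetaA p i = 0 := by
  have h := mk_eq_zero_of_mem_thetaRels (p := p) (Or.inr (Or.inr (Or.inl ⟨i, hi, rfl⟩)))
  rwa [map_mul, map_pow] at h

lemma thetaU_pow_sub_two_mul_thetaB {j : Fin p} (hj : 1 ≤ (j : ℕ)) :
    thetaU p ^ (p - 2) * thetaB p j = 0 := by
  have h := mk_eq_zero_of_mem_thetaRels (p := p) (Or.inr (Or.inr (Or.inr (Or.inl ⟨j, hj, rfl⟩))))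
  rwa [map_mul, map_pow] at h

lemma thetaA_mul_thetaA (i j : Fin p) : thetaA p i * thetaA p j = 0 := by
  have h := mk_eq_zero_of_mem_thetaRels (p := p)
    (Or.inr (Or.inr (Or.inr (Or.inr (Or.inr (Or.inr (Or.inr (Or.inr ⟨i, j, rfl⟩))))))))
  rwa [map_mul] at h

lemma thetaA_mul_thetaB (i j : Fin p) :
    thetaA p i * thetaB p j = thetaU p * thetaMu p ^ ((i + j : ℕ) / p) * thetaA p (i + j) := by
  rcases Nat.eq_zero_or_pos (j : ℕ) with hj | hj
  · obtain rfl : j = 0 := Fin.ext hj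
    rw [thetaB_zero, add_zero, Fin.val_zero, add_zero, Nat.div_eq_of_lt i.2, pow_zero, mul_one,
      mul_comm]
  rcases lt_or_ge ((i : ℕ) + j) p with hs | hs
  · have h := mk_eq_zero_of_mem_thetaRels (p := p) (Or.inr (Or.inr (Or.inr (Or.inr (Or.inr
      (Or.inl ⟨i, j, i + j, hj, by omega, Fin.val_add_eq_of_add_lt hs, rfl⟩))))))
    rw [map_sub, map_mul, map_mul, sub_eq_zero] at h
    rw [Nat.div_eq_of_lt hs, pow_zero, mul_one]
    exact h
  · have hk : ((i + j : Fin p) : ℕ) + p = i + j := by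
      rw [Fin.val_add_eq_ite, if_pos hs]
      omega
    have h := mk_eq_zero_of_mem_thetaRels (p := p) (Or.inr (Or.inr (Or.inr (Or.inr (Or.inr
      (Or.inr (Or.inr (Or.inl ⟨i, j, i + j, hj, hs, hk, rfl⟩))))))))
    rw [map_sub, map_mul, map_mul, map_mul, sub_eq_zero] at h
    rw [Nat.div_eq_of_lt_le (k := 1) (by omega) (by omega), pow_one]
    exact h

lemma thetaB_mul_thetaB (i j : Fin p) :
    thetaB p i * thetaB p j = thetaU p * thetaMu p ^ ((i + j : ℕ) / p) * thetaB p (i + j) := by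
  rcases Nat.eq_zero_or_pos (i : ℕ) with hi | hi
  · obtain rfl : i = 0 := Fin.ext hi
    rw [thetaB_zero, zero_add, Fin.val_zero, zero_add, Nat.div_eq_of_lt j.2, pow_zero, mul_one]
  rcases Nat.eq_zero_or_pos (j : ℕ) with hj | hj
  · obtain rfl : j = 0 := Fin.ext hj
    rw [thetaB_zero, add_zero, Fin.val_zero, add_zero, Nat.div_eq_of_lt i.2, pow_zero, mul_one,
      mul_comm]
  rcases lt_or_ge ((i : ℕ) + j) p with hs | hs
  · have h := mk_eq_zero_of_mem_thetaRels (p := p) (Or.inr (Or.inr (Or.inr (Or.inr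
      (Or.inl ⟨i, j, i + j, hi, hj, by omega, Fin.val_add_eq_of_add_lt hs, rfl⟩)))))
    rw [map_sub, map_mul, map_mul, sub_eq_zero] at h
    rw [Nat.div_eq_of_lt hs, pow_zero, mul_one]
    exact h
  · have hk : ((i + j : Fin p) : ℕ) + p = i + j := by
      rw [Fin.val_add_eq_ite, if_pos hs]
      omega
    have h := mk_eq_zero_of_mem_thetaRels (p := p) (Or.inr (Or.inr (Or.inr (Or.inr (Or.inr
      (Or.inr (Or.inl ⟨i, j, i + j, hi, hj, hs, hk, rfl⟩)))))))
    rw [map_sub, map_mul, map_mul, map_mul, sub_eq_zero] at h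
    rw [Nat.div_eq_of_lt_le (k := 1) (by omega) (by omega), pow_one]
    exact h

end ThetaRelations

section ThetaSpan

variable (p : ℕ) [NeZero p]

def thetaBasisFamily : ThetaBasisIndex p → Theta p
  | .inl i => thetaU p ^ (i : ℕ)
  | .inr (.inl x) => thetaU p ^ (x.1 : ℕ) * thetaA p x.2
  | .inr (.inr (.inl _)) => thetaU p ^ (p - 2) * thetaA p ⟨p - 1, Nat.sub_one_lt (NeZero.ne p)⟩
  | .inr (.inr (.inr x)) => thetaU p ^ (x.1 : ℕ) * thetaB p x.2

def thetaSpan : Submodule (Algebra.adjoin (ZMod p) {thetaMu p}) (Theta p) :=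
  Submodule.span _ (Set.range (thetaBasisFamily p))

variable {p}

lemma thetaMu_pow_mul_mem_thetaSpan {x : Theta p} (hx : x ∈ thetaSpan p) (m : ℕ) :
    thetaMu p ^ m * x ∈ thetaSpan p :=
  (thetaSpan p).smul_mem ⟨_, pow_mem (Algebra.self_mem_adjoin_singleton _ _) m⟩ hx

lemma thetaU_pow_mem_thetaSpan (i : ℕ) : thetaU p ^ i ∈ thetaSpan p := by
  by_cases hi : i ≤ p - 2
  · exact Submodule.subset_span ⟨.inl ⟨i, hi⟩, rfl⟩
  · rw [thetaU_pow_eq_zero (by omega)]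
    exact zero_mem _

lemma thetaU_pow_mul_thetaA_mem_thetaSpan (i : ℕ) (j : Fin p) :
    thetaU p ^ i * thetaA p j ∈ thetaSpan p := by
  by_cases hi : i ≤ p - 3
  · exact Submodule.subset_span ⟨.inr (.inl (⟨i, hi⟩, j)), rfl⟩
  by_cases hlast : i = p - 2 ∧ (j : ℕ) = p - 1
  · obtain ⟨rfl, hj⟩ := hlast
    obtain rfl : j = ⟨p - 1, Nat.sub_one_lt (NeZero.ne p)⟩ := Fin.ext hj
    exact Submodule.subset_span ⟨.inr (.inr (.inl ())), rfl⟩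
  have hzero : thetaU p ^ i * thetaA p j = 0 := by
    by_cases hi' : i = p - 2
    · subst hi'
      exact thetaU_pow_sub_two_mul_thetaA (by have := j.2; omega)
    · rw [thetaU_pow_eq_zero (by omega), zero_mul]
  rw [hzero]
  exact zero_mem _

lemma thetaU_pow_mul_thetaB_mem_thetaSpan (i : ℕ) (j : Fin p) :
    thetaU p ^ i * thetaB p j ∈ thetaSpan p := by
  rcases Nat.eq_zero_or_pos (j : ℕ) with hj | hj
  · obtain rfl : j = 0 := Fin.ext hj
    rw [thetaB_zero, ← pow_succ]
    exact thetaU_pow_mem_thetaSpan _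
  by_cases hi : i ≤ p - 3
  · exact Submodule.subset_span ⟨.inr (.inr (.inr (⟨i, hi⟩, ⟨j, hj⟩))), rfl⟩
  · rw [← Nat.sub_add_cancel (by omega : p - 2 ≤ i), pow_add, mul_assoc,
      thetaU_pow_sub_two_mul_thetaB hj, mul_zero]
    exact zero_mem _

lemma mul_mem_thetaSpan {x y : Theta p} (hx : x ∈ thetaSpan p)
    (hu : ∀ i, thetaU p ^ i * y ∈ thetaSpan p)
    (ha : ∀ i j, thetaU p ^ i * thetaA p j * y ∈ thetaSpan p)
    (hb : ∀ i j, thetaU p ^ i * thetaB p j * y ∈ thetaSpan p) :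
    x * y ∈ thetaSpan p := by
  induction hx using Submodule.span_induction with
  | mem _ h =>
    obtain ⟨i | x | _ | x, rfl⟩ := h
    exacts [hu _, ha _ _, ha _ _, hb _ _]
  | zero => rw [zero_mul]; exact zero_mem _
  | add _ _ _ _ h₁ h₂ => rw [add_mul]; exact add_mem h₁ h₂
  | smul c _ _ h => rw [smul_mul_assoc]; exact Submodule.smul_mem _ c h

lemma mul_thetaU_mem_thetaSpan {x : Theta p} (hx : x ∈ thetaSpan p) :
    x * thetaU p ∈ thetaSpan p := by
  refine mul_mem_thetaSpan hx (fun i => ?_) (fun i j => ?_) (fun i j => ?_)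
  · rw [← pow_succ]
    exact thetaU_pow_mem_thetaSpan _
  · rw [mul_right_comm, ← pow_succ]
    exact thetaU_pow_mul_thetaA_mem_thetaSpan _ _
  · rw [mul_right_comm, ← pow_succ]
    exact thetaU_pow_mul_thetaB_mem_thetaSpan _ _

lemma mul_thetaMu_mem_thetaSpan {x : Theta p} (hx : x ∈ thetaSpan p) :
    x * thetaMu p ∈ thetaSpan p := by
  simpa only [pow_one, mul_comm] using thetaMu_pow_mul_mem_thetaSpan hx 1

lemma mul_thetaA_mem_thetaSpan {x : Theta p} (hx : x ∈ thetaSpan p) (k : Fin p) :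
    x * thetaA p k ∈ thetaSpan p := by
  refine mul_mem_thetaSpan hx (fun i => ?_) (fun i j => ?_) (fun i j => ?_)
  · exact thetaU_pow_mul_thetaA_mem_thetaSpan _ _
  · rw [mul_assoc, thetaA_mul_thetaA, mul_zero]
    exact zero_mem _
  · rw [mul_assoc, mul_comm (thetaB p j), thetaA_mul_thetaB]
    convert thetaMu_pow_mul_mem_thetaSpan (thetaU_pow_mul_thetaA_mem_thetaSpan (i + 1) (k + j))
      ((k + j : ℕ) / p) using 1
    ring

lemma mul_thetaB_mem_thetaSpan {x : Theta p} (hx : x ∈ thetaSpan p) (k : Fin p) :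
    x * thetaB p k ∈ thetaSpan p := by
  refine mul_mem_thetaSpan hx (fun i => ?_) (fun i j => ?_) (fun i j => ?_)
  · exact thetaU_pow_mul_thetaB_mem_thetaSpan _ _
  · rw [mul_assoc, thetaA_mul_thetaB]
    convert thetaMu_pow_mul_mem_thetaSpan (thetaU_pow_mul_thetaA_mem_thetaSpan (i + 1) (j + k))
      ((j + k : ℕ) / p) using 1
    ring
  · rw [mul_assoc, thetaB_mul_thetaB]
    convert thetaMu_pow_mul_mem_thetaSpan (thetaU_pow_mul_thetaB_mem_thetaSpan (i + 1) (j + k))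
      ((j + k : ℕ) / p) using 1
    ring

open MvPolynomial in
lemma thetaSpan_eq_top : thetaSpan p = ⊤ := by
  refine Submodule.eq_top_iff'.2 fun x => ?_
  obtain ⟨f, rfl⟩ := Ideal.Quotient.mk_surjective x
  induction f using MvPolynomial.induction_on with
  | C a =>
    have h1 : (1 : Theta p) ∈ thetaSpan p := by simpa using thetaU_pow_mem_thetaSpan (p := p) 0
    rw [← algebraMap_eq, Ideal.Quotient.mk_algebraMap, Algebra.algebraMap_eq_smul_one]
    exact Submodule.smul_of_tower_mem _ a h1
  | add f g hf hg => rw [map_add]; exact add_mem hf hg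
  | mul_X f g hf =>
    rw [map_mul]
    cases g with
    | u => exact mul_thetaU_mem_thetaSpan hf
    | mu => exact mul_thetaMu_mem_thetaSpan hf
    | a k => exact mul_thetaA_mem_thetaSpan hf k
    | b k => exact mul_thetaB_mem_thetaSpan hf k

end ThetaSpan

section ThetaBasisExp

variable {p : ℕ}

variable (p) in
def thetaBasisExp : ThetaBasisIndex p → ℕ × ℕ × ℕ
  | .inl i => (0, i, 0)
  | .inr (.inl x) => (1, x.1, x.2)
  | .inr (.inr (.inl _)) => (1, p - 2, p - 1)
  | .inr (.inr (.inr x)) => (0, x.1 + 1, x.2)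

lemma thetaBasisExp_injective (hp : 3 ≤ p) : Function.Injective (thetaBasisExp p) := by
  rintro (⟨i, hi⟩ | ⟨⟨i, hi⟩, j⟩ | _ | ⟨⟨i, hi⟩, j, hj⟩)
    (⟨i', hi'⟩ | ⟨⟨i', hi'⟩, j'⟩ | _ | ⟨⟨i', hi'⟩, j', hj'⟩) h <;>
    simp only [thetaBasisExp, Prod.mk.injEq] at h
  all_goals first
    | omega
    | rfl
    | (obtain ⟨-, rfl, -⟩ := h; rfl)
    | (obtain ⟨-, rfl, hj⟩ := h; obtain rfl := Fin.ext hj; rfl)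
    | (obtain ⟨-, hi, hj⟩ := h; obtain rfl : i = i' := by omega
       obtain rfl := Fin.ext hj; rfl)

lemma thetaBasisExp_lt [NeZero p] (j : ThetaBasisIndex p) : (thetaBasisExp p j).2.2 < p := by
  have := NeZero.pos p
  rcases j with _ | ⟨_, j⟩ | _ | ⟨_, j, _⟩
  exacts [this, j.2, Nat.sub_lt this one_pos, j.2]

lemma mu_pow_add_thetaBasisExp_injective [NeZero p] (hp : 3 ≤ p) :
    Function.Injective fun jm : ThetaBasisIndex p × ℕ =>
      (0, 0, p * jm.2) + thetaBasisExp p jm.1 := by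
  rintro ⟨j, m⟩ ⟨j', m'⟩ h
  have hk : p * m + (thetaBasisExp p j).2.2 = p * m' + (thetaBasisExp p j').2.2 :=
    congrArg (fun x => x.2.2) h
  have hdiv {m r : ℕ} (hr : r < p) : (p * m + r) / p = m := by
    rw [Nat.mul_add_div (NeZero.pos p), Nat.div_eq_of_lt hr, add_zero]
  obtain rfl : m = m' := by
    rw [← hdiv (m := m) (thetaBasisExp_lt j), hk, hdiv (thetaBasisExp_lt j')]
  exact Prod.ext (thetaBasisExp_injective hp (add_left_cancel h)) rfl

end ThetaBasisExp

section ThetaModel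

open Truncation Truncation.TruncAlgebra MvPolynomial

variable (p : ℕ) [NeZero p]

/-- Exponents `(e, i, k)` of the monomials `α ^ e * u ^ i * t ^ k` that are nonzero in the model
of `Θ` in which `u ↦ u`, `μ ↦ t ^ p`, `a_j ↦ α * t ^ j` and `b_j ↦ u * t ^ j`. -/
def thetaTruncSet : TruncSet (ℕ × ℕ × ℕ) where
  carrier := {x | (x.1 = 0 ∧ x.2.1 ≤ p - 2 ∧ (x.2.2 % p = 0 ∨ 1 ≤ x.2.1)) ∨
    (x.1 = 1 ∧ (x.2.1 ≤ p - 3 ∨ (x.2.1 = p - 2 ∧ x.2.2 % p = p - 1)))}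
  zero_mem := by simp
  add_mem_of_add_add_mem := by
    rintro ⟨e₁, i₁, k₁⟩ ⟨e₂, i₂, k₂⟩ ⟨e₃, i₃, k₃⟩ h₁ h₂ h₃ h
    simp only [Set.mem_ofPred_eq, Prod.mk_add_mk] at *
    have := Nat.mod_lt k₁ (NeZero.pos p)
    have := Nat.mod_lt k₂ (NeZero.pos p)
    have := Nat.mod_lt (k₁ + k₂) (NeZero.pos p)
    have h₁₂ := Nat.add_mod_add_ite k₁ k₂ p
    have h₁₂₃ := Nat.add_mod_add_ite (k₁ + k₂) k₃ p
    split_ifs at h₁₂ h₁₂₃ <;> omega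

abbrev ThetaModel : Type := TruncAlgebra (ZMod p) (thetaTruncSet p)

def thetaModelGen : ThetaGen p → ThetaModel p
  | .u => monom (0, 1, 0)
  | .mu => monom (0, 0, p)
  | .a i => monom (1, 0, i)
  | .b j => monom (0, 1, j)

variable {p}

lemma mem_thetaTruncSet {e i k : ℕ} : (e, i, k) ∈ (thetaTruncSet p).carrier ↔
    (e = 0 ∧ i ≤ p - 2 ∧ (k % p = 0 ∨ 1 ≤ i)) ∨
      (e = 1 ∧ (i ≤ p - 3 ∨ (i = p - 2 ∧ k % p = p - 1))) := Iff.rfl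

lemma thetaModel_monom_u_pow (n : ℕ) :
    (monom (0, 1, 0) : ThetaModel p) ^ n = monom (0, n, 0) := by
  induction n with
  | zero => exact monom_zero.symm
  | succ n ih =>
    rw [pow_succ, ih, ← monom_add (by simp [mem_thetaTruncSet]; omega)]
    rfl

lemma thetaModel_monom_mu_pow (m : ℕ) :
    (monom (0, 0, p) : ThetaModel p) ^ m = monom (0, 0, p * m) := by
  induction m with
  | zero => exact monom_zero.symm
  | succ m ih =>
    rw [pow_succ, ih, ← monom_add (by simp [mem_thetaTruncSet])]
    simp [Nat.mul_succ]

-- Each relation either holds between equal monomials or has a monomial outside the truncation set.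
lemma aeval_thetaModelGen_of_mem_thetaRels (hp : 3 ≤ p) {r : MvPolynomial (ThetaGen p) (ZMod p)}
    (hr : r ∈ thetaRels p) : aeval (thetaModelGen p) r = 0 := by
  obtain rfl | rfl | ⟨i, hi, rfl⟩ | ⟨j, hj, rfl⟩ | ⟨i, j, k, hi, hj, hs, hk, rfl⟩ |
      ⟨i, j, k, hj, hs, hk, rfl⟩ | ⟨i, j, k, hi, hj, hs, hk, rfl⟩ |
      ⟨i, j, k, hj, hs, hk, rfl⟩ | ⟨i, j, rfl⟩ := hr <;>
    simp only [map_sub, map_mul, map_pow, aeval_X, thetaModelGen, thetaModel_monom_u_pow]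
  · rw [Fin.val_zero, sub_self]
  · exact monom_of_notMem (by simp [mem_thetaTruncSet]; omega)
  · have := Nat.mod_eq_of_lt i.2
    rw [← monom_add (by simp [mem_thetaTruncSet])]
    exact monom_of_notMem (by simp [mem_thetaTruncSet]; omega)
  · rw [← monom_add (by simp [mem_thetaTruncSet])]
    exact monom_of_notMem (by simp [mem_thetaTruncSet])
  · rw [← monom_add (by simp [mem_thetaTruncSet]; omega),
      ← monom_add (by simp [mem_thetaTruncSet]; omega), sub_eq_zero]
    simp [hk]
  · rw [← monom_add (by simp [mem_thetaTruncSet]; omega),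
      ← monom_add (by simp [mem_thetaTruncSet]; omega), sub_eq_zero]
    simp [hk]
  · rw [← monom_add (by simp [mem_thetaTruncSet]; omega),
      ← monom_add (by simp [mem_thetaTruncSet]),
      ← monom_add (by simp [mem_thetaTruncSet]; omega), sub_eq_zero]
    simp [← hk, add_comm]
  · rw [← monom_add (by simp [mem_thetaTruncSet]; omega),
      ← monom_add (by simp [mem_thetaTruncSet]),
      ← monom_add (by simp [mem_thetaTruncSet]; omega), sub_eq_zero]
    simp [← hk, add_comm]
  · rw [← monom_add (by simp [mem_thetaTruncSet])]
    exact monom_of_notMem (by simp [mem_thetaTruncSet])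

variable (p) in
def thetaToModel (hp : 3 ≤ p) : Theta p →ₐ[ZMod p] ThetaModel p :=
  Ideal.Quotient.liftₐ _ (aeval (thetaModelGen p)) fun _ hr =>
    (Ideal.span_le (I := RingHom.ker (aeval (thetaModelGen p)))).2
      (fun _ h => aeval_thetaModelGen_of_mem_thetaRels hp h) hr

lemma thetaToModel_thetaU (hp : 3 ≤ p) : thetaToModel p hp (thetaU p) = monom (0, 1, 0) :=
  aeval_X _ _

lemma thetaToModel_thetaMu (hp : 3 ≤ p) : thetaToModel p hp (thetaMu p) = monom (0, 0, p) :=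
  aeval_X _ _

lemma thetaToModel_thetaA (hp : 3 ≤ p) (j : Fin p) :
    thetaToModel p hp (thetaA p j) = monom (1, 0, (j : ℕ)) :=
  aeval_X _ _

lemma thetaToModel_thetaB (hp : 3 ≤ p) (j : Fin p) :
    thetaToModel p hp (thetaB p j) = monom (0, 1, (j : ℕ)) :=
  aeval_X _ _

lemma thetaToModel_thetaBasisFamily (hp : 3 ≤ p) (j : ThetaBasisIndex p) :
    thetaToModel p hp (thetaBasisFamily p j) = monom (thetaBasisExp p j) := by
  rcases j with ⟨i, hi⟩ | ⟨⟨i, hi⟩, j⟩ | _ | ⟨⟨i, hi⟩, j, hj⟩ <;>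
    simp only [thetaBasisFamily, thetaBasisExp, map_mul, map_pow, thetaToModel_thetaU,
      thetaToModel_thetaA, thetaToModel_thetaB, thetaModel_monom_u_pow]
  · rw [← monom_add (by simp [mem_thetaTruncSet]; omega)]
    simp
  · rw [← monom_add (by simp [mem_thetaTruncSet])]
    simp
  · rw [← monom_add (by simp [mem_thetaTruncSet]; omega)]
    simp

lemma mu_pow_add_thetaBasisExp_mem (hp : 3 ≤ p) (j : ThetaBasisIndex p) (m : ℕ) :
    (0, 0, p * m) + thetaBasisExp p j ∈ (thetaTruncSet p).carrier := by
  rcases j with ⟨i, hi⟩ | ⟨⟨i, hi⟩, j⟩ | _ | ⟨⟨i, hi⟩, j, hj⟩ <;>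
    simp [thetaBasisExp, mem_thetaTruncSet] <;> omega

lemma linearIndependent_thetaMu_pow_mul_thetaBasisFamily (hp : 3 ≤ p) :
    LinearIndependent (ZMod p) fun jm : ThetaBasisIndex p × ℕ =>
      thetaMu p ^ jm.2 * thetaBasisFamily p jm.1 := by
  have hinj : Function.Injective fun jm : ThetaBasisIndex p × ℕ =>
      (⟨_, mu_pow_add_thetaBasisExp_mem hp jm.1 jm.2⟩ : (thetaTruncSet p).carrier) :=
    fun _ _ h => mu_pow_add_thetaBasisExp_injective hp (congrArg Subtype.val h)
  refine LinearIndependent.of_comp (thetaToModel p hp).toLinearMap ?_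
  have himage : (thetaToModel p hp).toLinearMap ∘
      (fun jm : ThetaBasisIndex p × ℕ => thetaMu p ^ jm.2 * thetaBasisFamily p jm.1) =
      fun jm => monom ((0, 0, p * jm.2) + thetaBasisExp p jm.1) := by
    funext ⟨j, m⟩
    simp only [Function.comp_apply, AlgHom.toLinearMap_apply, map_mul, map_pow,
      thetaToModel_thetaMu, thetaToModel_thetaBasisFamily, thetaModel_monom_mu_pow]
    exact (monom_add fun _ => ⟨by simp [mem_thetaTruncSet], by
      simpa only [mul_zero, Prod.mk_zero_zero, zero_add] using
        mu_pow_add_thetaBasisExp_mem hp j 0⟩).symm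
  have hmonom := (linearIndependent_monom (R := ZMod p)).comp _ hinj
  rw [himage]
  exact hmonom

end ThetaModel

/-- For `p ≥ 5` prime, `Θ` is a free module over its subalgebra `F_p[μ]`
with basis `u^i` (`0 ≤ i ≤ p-2`), `u^i·a_j` (`0 ≤ i ≤ p-3`, `0 ≤ j ≤ p-1`),
`u^{p-2}·a_{p-1}`, and `u^i·b_j` (`0 ≤ i ≤ p-3`, `1 ≤ j ≤ p-1`). -/
theorem statement6 (p : ℕ) [NeZero p] (hp5 : 5 ≤ p) :
    ∃ bs : Module.Basis (ThetaBasisIndex p) (Algebra.adjoin (ZMod p) {thetaMu p}) (Theta p),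
      (∀ i : {i : ℕ // i ≤ p - 2}, bs (Sum.inl i) = thetaU p ^ (i : ℕ)) ∧
      (∀ x : {i : ℕ // i ≤ p - 3} × Fin p,
        bs (Sum.inr (Sum.inl x)) = thetaU p ^ (x.1 : ℕ) * thetaA p x.2) ∧
      (bs (Sum.inr (Sum.inr (Sum.inl Unit.unit))) =
        thetaU p ^ (p - 2) * thetaA p ⟨p - 1, by omega⟩) ∧
      (∀ x : {i : ℕ // i ≤ p - 3} × {j : Fin p // 1 ≤ (j : ℕ)},
        bs (Sum.inr (Sum.inr (Sum.inr x))) = thetaU p ^ (x.1 : ℕ) * thetaB p x.2) := by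
  have hli : LinearIndependent (Algebra.adjoin (ZMod p) {thetaMu p}) (thetaBasisFamily p) :=
    linearIndependent_adjoin_singleton_of_pow_mul
      (linearIndependent_thetaMu_pow_mul_thetaBasisFamily (by omega))
  refine ⟨Module.Basis.mk hli thetaSpan_eq_top.ge, fun _ => ?_, fun _ => ?_, ?_, fun _ => ?_⟩ <;>
    exact Module.Basis.mk_apply ..
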